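/- Let P be a plane and p a point of P, and let P(p, Q, a) be the plane obtained by attaching an independent copy of the 14-point rigid plane Q to P, identifying the point a of Q with p, so that any line joining a point of P ∖ {p} with a point of Q ∖ {a} is trivial. Then every automorphism of P(p, Q, a) that fixes the point set of P setwise restricts to an automorphism of P, and every automorphism of P fixing p extends to an automorphism of P(p, Q, a) acting as the identity on the attached copy of Q. -/

import Mathlib

/-- A plane: a two-sorted point-line incidence system satisfying axioms (A)-(D). -/
structure IsPlane {Pt Ln : Type} (inc : Pt → Ln → Prop) : Prop where
  unique_line : ∀ p q : Pt, p ≠ q → ∃! l : Ln, inc p l ∧ inc q l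
  unique_point : ∀ l m : Ln, l ≠ m → ∀ p q : Pt,
    inc p l → inc p m → inc q l → inc q m → p = q
  two_points : ∀ l : Ln, ∃ p q : Pt, p ≠ q ∧ inc p l ∧ inc q l
  nondeg : ∃ p q r : Pt, p ≠ q ∧ p ≠ r ∧ q ≠ r ∧
    ∀ l : Ln, ¬ (inc p l ∧ inc q l ∧ inc r l)

/-- Three points are collinear if some line is incident with all three. -/
def PlaneCollinear {Pt Ln : Type} (inc : Pt → Ln → Prop) (p q r : Pt) : Prop :=
  ∃ l : Ln, inc p l ∧ inc q l ∧ inc r l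

/-- The points of Ditor's rigid plane `Q`. -/
inductive QPt : Type
  | a | b | c | d | e | f | g | h | k | l | m | n | o
deriving DecidableEq

open QPt in
/-- The nontrivial lines of the plane `Q` (all other lines are two-point lines). -/
def QLines : Set (Set QPt) :=
  {{a, b, c, d, e}, {c, n, l, f}, {e, o, l, f}, {a, f, g, h}, {b, k, l, m},
   {d, n, k, f}, {d, o, m, h}, {c, k, g}, {e, m, g}, {a, k, o}, {b, n, o}}

/-- Collinearity in the plane `Q`: three pairwise distinct points lying on a common
(nontrivial) line. -/
def QCol (x y z : QPt) : Prop :=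
  x ≠ y ∧ x ≠ z ∧ y ≠ z ∧ ∃ S ∈ QLines, x ∈ S ∧ y ∈ S ∧ z ∈ S

/-- The point set of the plane `P(p, Q, a)`: the points of `P` together with the points
of `Q` other than `a` (the point `a` of `Q` is identified with the point `p` of `P`). -/
def AmPt (Pt : Type) : Type := Pt ⊕ {q : QPt // q ≠ QPt.a}

/-- A point of `Q` viewed in `P(p, Q, a)` (with `a` identified with `p`). -/
def toAm {Pt : Type} (p : Pt) (q : QPt) : AmPt Pt :=
  if h : q = QPt.a then Sum.inl p else Sum.inr ⟨q, h⟩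

/-- Collinearity in `P(p, Q, a)`: a triple is collinear iff it is a collinear triple of
`P` or a collinear triple of the attached copy of `Q`; all lines joining a point of
`P \ {p}` with a point of `Q \ {a}` are trivial. -/
def AmCol {Pt Ln : Type} (inc : Pt → Ln → Prop) (p : Pt) (x y z : AmPt Pt) : Prop :=
  (∃ x' y' z' : Pt, x = Sum.inl x' ∧ y = Sum.inl y' ∧ z = Sum.inl z' ∧
    PlaneCollinear inc x' y' z') ∨
  (∃ qx qy qz : QPt, x = toAm p qx ∧ y = toAm p qy ∧ z = toAm p qz ∧ QCol qx qy qz)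

lemma toAm_inl {Pt : Type} {p u : Pt} {q : QPt} (h : toAm p q = Sum.inl u) :
    q = QPt.a := by
  unfold toAm at h
  by_cases hq : q = QPt.a
  · exact hq
  · exact absurd ((dif_neg hq).symm.trans h) Sum.inr_ne_inl

lemma amCol_inl {Pt Ln : Type} (inc : Pt → Ln → Prop) (p a b c : Pt) :
    AmCol inc p (Sum.inl a) (Sum.inl b) (Sum.inl c) ↔ PlaneCollinear inc a b c := by
  constructor
  · rintro (⟨x', y', z', hx, hy, hz, hc⟩ | ⟨qx, qy, qz, hx, hy, hz, hq⟩)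
    · cases hx; cases hy; cases hz
      · exact hc
    · exact absurd ((toAm_inl hx.symm).trans (toAm_inl hy.symm).symm) hq.1
  · intro hc
    exact Or.inl ⟨a, b, c, rfl, rfl, rfl, hc⟩

/-- Every automorphism of `P(p, Q, a)` fixing the point set of `P` setwise restricts to
an automorphism of `P`; and every automorphism of `P` fixing `p` extends to an
automorphism of `P(p, Q, a)` which is the identity on the attached copy of `Q`. -/
theorem stmt14 {Pt Ln : Type} (inc : Pt → Ln → Prop) (h : IsPlane inc) (p : Pt) :
    (∀ f : Equiv.Perm (AmPt Pt),
      (∀ x y z : AmPt Pt, AmCol inc p x y z ↔ AmCol inc p (f x) (f y) (f z)) →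
      (∀ x : AmPt Pt, (∃ u : Pt, x = Sum.inl u) ↔ (∃ u : Pt, f x = Sum.inl u)) →
      ∃ g : Equiv.Perm Pt,
        (∀ a b c : Pt, PlaneCollinear inc a b c ↔ PlaneCollinear inc (g a) (g b) (g c)) ∧
        ∀ u : Pt, f (Sum.inl u) = Sum.inl (g u)) ∧
    (∀ g : Equiv.Perm Pt,
      (∀ a b c : Pt, PlaneCollinear inc a b c ↔ PlaneCollinear inc (g a) (g b) (g c)) →
      g p = p →
      ∃ f : Equiv.Perm (AmPt Pt),
        (∀ x y z : AmPt Pt, AmCol inc p x y z ↔ AmCol inc p (f x) (f y) (f z)) ∧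
        (∀ u : Pt, f (Sum.inl u) = Sum.inl (g u)) ∧
        ∀ q : {q : QPt // q ≠ QPt.a}, f (Sum.inr q) = Sum.inr q) := by

  constructor
  · intro f hcol hfix
    have h1 : ∀ u : Pt, ∃ v, f (Sum.inl u) = Sum.inl v := fun u =>
      (hfix (Sum.inl u)).mp ⟨u, rfl⟩
    have h2 : ∀ u : Pt, ∃ v, f⁻¹ (Sum.inl u) = Sum.inl v := by
      intro u
      refine (hfix (f⁻¹ (Sum.inl u))).mpr ⟨u, ?_⟩
      exact f.apply_symm_apply _
    choose g1 hg1 using h1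
    choose g2 hg2 using h2
    have linv : ∀ u, g2 (g1 u) = u := by
      intro u
      have h3 : f⁻¹ (Sum.inl (g1 u)) = Sum.inl (g2 (g1 u)) := hg2 _
      rw [← hg1 u, Equiv.Perm.inv_def] at h3
      erw [Equiv.symm_apply_apply] at h3
      exact (Sum.inl.inj h3).symm
    have rinv : ∀ u, g1 (g2 u) = u := by
      intro u
      have h3 : f (Sum.inl (g2 u)) = Sum.inl (g1 (g2 u)) := hg1 _
      rw [← hg2 u, Equiv.Perm.inv_def] at h3
      erw [Equiv.apply_symm_apply] at h3
      exact (Sum.inl.inj h3).symm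
    refine ⟨⟨g1, g2, linv, rinv⟩, ?_, fun u => hg1 u⟩
    intro a b c
    have := hcol (Sum.inl a) (Sum.inl b) (Sum.inl c)
    rw [hg1, hg1, hg1, amCol_inl, amCol_inl] at this
    exact this
  · intro g hg hp
    refine ⟨Equiv.sumCongr g (Equiv.refl _), ?_, fun u => rfl, fun q => rfl⟩
    set f := Equiv.sumCongr g (Equiv.refl {q : QPt // q ≠ QPt.a}) with hf
    have hfq : ∀ q : QPt, f (toAm p q) = toAm p q := by
      intro q
      unfold toAm
      by_cases hq : q = QPt.a
      · subst hq
        show Sum.inl (g p) = Sum.inl p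
        rw [hp]
      · have e : (if h : q = QPt.a then (Sum.inl p : AmPt Pt) else Sum.inr ⟨q, h⟩) = Sum.inr ⟨q, hq⟩ := dif_neg hq
        exact (congrArg f e).trans e.symm
    intro x y z
    constructor
    · rintro (⟨x', y', z', rfl, rfl, rfl, hc⟩ | ⟨qx, qy, qz, rfl, rfl, rfl, hq⟩)
      · exact Or.inl ⟨g x', g y', g z', rfl, rfl, rfl, (hg x' y' z').mp hc⟩
      · exact Or.inr ⟨qx, qy, qz, hfq qx, hfq qy, hfq qz, hq⟩
    · rintro (⟨x', y', z', hx, hy, hz, hc⟩ | ⟨qx, qy, qz, hx, hy, hz, hq⟩)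
      · obtain ⟨u, rfl⟩ : ∃ u, x = Sum.inl u := by
          cases x with
          | inl u => exact ⟨u, rfl⟩
          | inr q => exact absurd hx (fun h2 => Sum.inr_ne_inl (h2 : Sum.inr q = Sum.inl x'))
        obtain ⟨v, rfl⟩ : ∃ v, y = Sum.inl v := by
          cases y with
          | inl v => exact ⟨v, rfl⟩
          | inr q => exact absurd hy (fun h2 => Sum.inr_ne_inl (h2 : Sum.inr q = Sum.inl y'))
        obtain ⟨w, rfl⟩ : ∃ w, z = Sum.inl w := by
          cases z with
          | inl w => exact ⟨w, rfl⟩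
          | inr q => exact absurd hz (fun h2 => Sum.inr_ne_inl (h2 : Sum.inr q = Sum.inl z'))
        refine Or.inl ⟨u, v, w, rfl, rfl, rfl, (hg u v w).mpr ?_⟩
        have hx' : g u = x' := Sum.inl.inj hx
        have hy' : g v = y' := Sum.inl.inj hy
        have hz' : g w = z' := Sum.inl.inj hz
        rw [hx', hy', hz']
        exact hc
      · have ex : x = toAm p qx := f.injective (by rw [hfq]; exact hx)
        have ey : y = toAm p qy := f.injective (by rw [hfq]; exact hy)
        have ez : z = toAm p qz := f.injective (by rw [hfq]; exact hz)
        exact Or.inr ⟨qx, qy, qz, ex, ey, ez, hq⟩
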